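/- (Lemma 1, algebraic form.) Let α > 0. If sec ≥ α and Ric(X,X) < n α ‖X‖² for every nonzero X ∈ E, then Q̊(φ) > 0 for every nonzero traceless symmetric bilinear form φ on E. If instead sec ≥ α and Ric(X,X) ≤ n α ‖X‖² for every X ∈ E, then Q̊(φ) ≥ 0 for every traceless symmetric bilinear form φ on E. -/

import Mathlib

/-!
Diagonalize `φ` in an orthonormal eigenbasis `v` with eigenvalues `μ`, so that `∑ μ a = 0`.
Then `Q̊(φ) = -∑ a b, μ a μ b K a b` with `K a b = R(v a, v b, v a, v b)`, and since `K` is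
symmetric this equals `½ ∑ a b, K a b (μ a - μ b)² - ∑ a, μ a² Ric(v a, v a)`. Off the diagonal
`K ≥ α`, and `∑ a b, (μ a - μ b)² = 2 n ∑ a, μ a²` because `μ` sums to zero, so
`Q̊(φ) ≥ ∑ a, μ a² (n α - Ric(v a, v a))`; the Ricci bound makes every term nonnegative, and
positive where `μ a ≠ 0`.
-/

open scoped RealInnerProductSpace

open Finset

lemma sum_sq_mul_sub_le_neg_sum_sum {ι : Type*} [Fintype ι] {s : ι → ι → ℝ} {α : ℝ}
    (hs_symm : ∀ a b, s a b = s b a) (hs : ∀ a b, a ≠ b → α ≤ s a b) {μ : ι → ℝ}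
    (hμ : ∑ a, μ a = 0) :
    ∑ a, μ a ^ 2 * (Fintype.card ι * α - ∑ b, s a b) ≤ -∑ a, ∑ b, μ a * μ b * s a b := by
  have hdev : ∑ a, ∑ b, (μ a - μ b) ^ 2 = 2 * Fintype.card ι * ∑ a, μ a ^ 2 := by
    simp only [sub_sq, sum_add_distrib, sum_sub_distrib, ← mul_sum, ← sum_mul, hμ, sum_const,
      card_univ, nsmul_eq_mul]
    ring
  have hlow : α * ∑ a, ∑ b, (μ a - μ b) ^ 2 ≤ ∑ a, ∑ b, s a b * (μ a - μ b) ^ 2 := by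
    simp only [mul_sum]
    refine sum_le_sum fun a _ => sum_le_sum fun b _ => ?_
    rcases eq_or_ne a b with rfl | hab
    · simp
    · exact mul_le_mul_of_nonneg_right (hs a b hab) (sq_nonneg _)
  have hswap : ∑ a, ∑ b, s a b * μ b ^ 2 = ∑ a, μ a ^ 2 * ∑ b, s a b := by
    rw [sum_comm]
    simp only [mul_sum]
    exact sum_congr rfl fun a _ => sum_congr rfl fun b _ => by rw [hs_symm]; ring
  have hexp : ∑ a, ∑ b, s a b * (μ a - μ b) ^ 2
      = 2 * ∑ a, μ a ^ 2 * ∑ b, s a b - 2 * ∑ a, ∑ b, μ a * μ b * s a b := by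
    calc ∑ a, ∑ b, s a b * (μ a - μ b) ^ 2
        = ∑ a, ∑ b, (μ a ^ 2 * s a b + s a b * μ b ^ 2 - 2 * (μ a * μ b * s a b)) :=
          sum_congr rfl fun a _ => sum_congr rfl fun b _ => by ring
      _ = _ := by
          simp only [sum_add_distrib, sum_sub_distrib, ← mul_sum, hswap]
          ring
  have hlhs : ∑ a, μ a ^ 2 * (Fintype.card ι * α - ∑ b, s a b)
      = Fintype.card ι * α * ∑ a, μ a ^ 2 - ∑ a, μ a ^ 2 * ∑ b, s a b := by
    rw [mul_sum, ← sum_sub_distrib]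
    exact sum_congr rfl fun a _ => by ring
  rw [hdev, hexp] at hlow
  rw [hlhs]
  linarith

namespace OrthonormalBasis

variable {ι ι' E : Type*} [Fintype ι] [Fintype ι'] [NormedAddCommGroup E] [InnerProductSpace ℝ E]

noncomputable def endOfBilin (b : OrthonormalBasis ι ℝ E) (B : E →ₗ[ℝ] E →ₗ[ℝ] ℝ) : E →ₗ[ℝ] E :=
  ∑ j, (B.flip (b j)).smulRight (b j)

lemma endOfBilin_apply (b : OrthonormalBasis ι ℝ E) (B : E →ₗ[ℝ] E →ₗ[ℝ] ℝ) (x : E) :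
    b.endOfBilin B x = ∑ j, B x (b j) • b j := by
  simp [endOfBilin]

lemma inner_endOfBilin (b : OrthonormalBasis ι ℝ E) (B : E →ₗ[ℝ] E →ₗ[ℝ] ℝ) (x y : E) :
    ⟪b.endOfBilin B x, y⟫ = B x y := by
  conv_rhs => rw [← b.sum_repr' y]
  simp only [endOfBilin_apply, sum_inner, real_inner_smul_left, map_sum, map_smul, smul_eq_mul]
  exact sum_congr rfl fun j _ => mul_comm _ _

lemma endOfBilin_eq (b : OrthonormalBasis ι ℝ E) (b' : OrthonormalBasis ι' ℝ E)
    (B : E →ₗ[ℝ] E →ₗ[ℝ] ℝ) : b.endOfBilin B = b'.endOfBilin B :=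
  LinearMap.ext fun x => ext_inner_right ℝ fun y => by rw [inner_endOfBilin, inner_endOfBilin]

lemma isSymmetric_endOfBilin (b : OrthonormalBasis ι ℝ E) {B : E →ₗ[ℝ] E →ₗ[ℝ] ℝ}
    (hB : ∀ x y, B x y = B y x) : (b.endOfBilin B).IsSymmetric := fun x y => by
  rw [inner_endOfBilin, real_inner_comm, inner_endOfBilin, hB]

lemma trace_endOfBilin (b : OrthonormalBasis ι ℝ E) (B : E →ₗ[ℝ] E →ₗ[ℝ] ℝ) :
    (b.endOfBilin B).trace ℝ E = ∑ i, B (b i) (b i) := by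
  rw [LinearMap.trace_eq_sum_inner _ b]
  exact sum_congr rfl fun i _ => by rw [real_inner_comm, inner_endOfBilin]

lemma sum_apply_self_eq (b : OrthonormalBasis ι ℝ E) (b' : OrthonormalBasis ι' ℝ E)
    (B : E →ₗ[ℝ] E →ₗ[ℝ] ℝ) : ∑ i, B (b i) (b i) = ∑ i, B (b' i) (b' i) := by
  rw [← trace_endOfBilin, ← trace_endOfBilin, endOfBilin_eq b b']

lemma sum_sum_apply_eq (b : OrthonormalBasis ι ℝ E) (b' : OrthonormalBasis ι' ℝ E)
    (T : E →ₗ[ℝ] E →ₗ[ℝ] E →ₗ[ℝ] E →ₗ[ℝ] ℝ) :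
    ∑ i, ∑ k, T (b i) (b k) (b k) (b i) = ∑ i, ∑ k, T (b' i) (b' k) (b' k) (b' i) := by
  have h : ∀ X, ∑ k, T X (b k) (b k) X = ∑ k, T X (b' k) (b' k) X := fun X => by
    simpa using sum_apply_self_eq b b' ((T X).compr₂ (LinearMap.applyₗ X))
  simp_rw [h]
  simpa using sum_apply_self_eq b b' (∑ k, (T.flip (b' k)).flip (b' k))

lemma exists_eigenbasis_endOfBilin {n : ℕ} (e : OrthonormalBasis (Fin n) ℝ E)
    {φ : E →ₗ[ℝ] E →ₗ[ℝ] ℝ} (hφ : ∀ X Y, φ X Y = φ Y X) (htr : ∑ i, φ (e i) (e i) = 0) :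
    ∃ (v : OrthonormalBasis (Fin n) ℝ E) (μ : Fin n → ℝ),
      (∀ a, e.endOfBilin φ (v a) = μ a • v a) ∧ ∑ a, μ a = 0 ∧ (φ ≠ 0 → ∃ a, μ a ≠ 0) := by
  have : FiniteDimensional ℝ E := e.toBasis.finiteDimensional_of_finite
  have hn : Module.finrank ℝ E = n := by simp [Module.finrank_eq_card_basis e.toBasis]
  have hA := e.isSymmetric_endOfBilin hφ
  refine ⟨hA.eigenvectorBasis hn, hA.eigenvalues hn, hA.apply_eigenvectorBasis hn, ?_, ?_⟩
  · simpa [e.trace_endOfBilin, htr] using (hA.trace_eq_sum_eigenvalues hn).symm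
  · intro hφ0
    by_contra! hμ
    refine hφ0 (LinearMap.ext₂ fun X Y => ?_)
    have hA0 : e.endOfBilin φ = 0 := (hA.eigenvectorBasis hn).toBasis.ext fun a => by
      simp [hA.apply_eigenvectorBasis hn, hμ]
    rw [← e.inner_endOfBilin, hA0]
    simp

end OrthonormalBasis

section Curvature

variable {ι ι' E : Type*} [Fintype ι] [Fintype ι'] [NormedAddCommGroup E] [InnerProductSpace ℝ E]

/-- `ricci b R` and `secondKindTerm b R` are `Ric` and `Q̊`, computed in the basis `b`. -/
noncomputable def ricci (b : OrthonormalBasis ι ℝ E) (R : E →ₗ[ℝ] E →ₗ[ℝ] E →ₗ[ℝ] E →ₗ[ℝ] ℝ)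
    (X Y : E) : ℝ :=
  ∑ m, R (b m) X (b m) Y

noncomputable def secondKindTerm (b : OrthonormalBasis ι ℝ E)
    (R : E →ₗ[ℝ] E →ₗ[ℝ] E →ₗ[ℝ] E →ₗ[ℝ] ℝ) (φ : E →ₗ[ℝ] E →ₗ[ℝ] ℝ) : ℝ :=
  ∑ i, ∑ j, ∑ k, ∑ l, R (b i) (b k) (b l) (b j) * φ (b k) (b l) * φ (b i) (b j)

variable (R : E →ₗ[ℝ] E →ₗ[ℝ] E →ₗ[ℝ] E →ₗ[ℝ] ℝ)

lemma ricci_eq (b : OrthonormalBasis ι ℝ E) (b' : OrthonormalBasis ι' ℝ E) (X Y : E) :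
    ricci b R X Y = ricci b' R X Y := by
  simpa [ricci] using b.sum_apply_self_eq b' ((R.flip X).compr₂ (LinearMap.applyₗ Y))

lemma secondKindTerm_eq_sum_sum (b : OrthonormalBasis ι ℝ E) (φ : E →ₗ[ℝ] E →ₗ[ℝ] ℝ) :
    secondKindTerm b R φ =
      ∑ i, ∑ k, R (b i) (b k) (b.endOfBilin φ (b k)) (b.endOfBilin φ (b i)) := by
  unfold secondKindTerm
  refine sum_congr rfl fun i _ => ?_
  rw [sum_comm]
  refine sum_congr rfl fun k _ => ?_
  simp only [OrthonormalBasis.endOfBilin_apply, map_sum, map_smul, smul_eq_mul,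
    LinearMap.sum_apply, LinearMap.smul_apply, mul_sum]
  exact sum_congr rfl fun j _ => sum_congr rfl fun l _ => by ring

lemma secondKindTerm_eq (b : OrthonormalBasis ι ℝ E) (b' : OrthonormalBasis ι' ℝ E)
    (φ : E →ₗ[ℝ] E →ₗ[ℝ] ℝ) : secondKindTerm b R φ = secondKindTerm b' R φ := by
  set A := b.endOfBilin φ
  let compA : (E →ₗ[ℝ] E →ₗ[ℝ] ℝ) →ₗ[ℝ] E →ₗ[ℝ] E →ₗ[ℝ] ℝ :=
    { toFun := fun f => f.compl₁₂ A A
      map_add' := fun _ _ => rfl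
      map_smul' := fun _ _ => rfl }
  rw [secondKindTerm_eq_sum_sum, secondKindTerm_eq_sum_sum, ← b.endOfBilin_eq b' φ]
  exact b.sum_sum_apply_eq b' (R.compr₂ compA)

lemma secondKindTerm_eq_of_endOfBilin_apply (hR2 : ∀ X Y Z W : E, R X Y Z W = - R X Y W Z)
    (b : OrthonormalBasis ι ℝ E) (v : OrthonormalBasis ι' ℝ E) {φ : E →ₗ[ℝ] E →ₗ[ℝ] ℝ}
    {μ : ι' → ℝ} (hv : ∀ a, b.endOfBilin φ (v a) = μ a • v a) :
    secondKindTerm b R φ = -∑ a, ∑ c, μ a * μ c * R (v a) (v c) (v a) (v c) := by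
  rw [secondKindTerm_eq R b v, secondKindTerm_eq_sum_sum, ← b.endOfBilin_eq v]
  simp only [← sum_neg_distrib]
  refine sum_congr rfl fun a _ => sum_congr rfl fun c _ => ?_
  simp only [hv, map_smul, LinearMap.smul_apply, smul_eq_mul, hR2 (v a) (v c) (v c) (v a)]
  ring

lemma sum_sq_mul_sub_ricci_le_secondKindTerm (hR1 : ∀ X Y Z W : E, R X Y Z W = - R Y X Z W)
    (hR2 : ∀ X Y Z W : E, R X Y Z W = - R X Y W Z) {α : ℝ}
    (hsec : ∀ X Y : E, α * (‖X‖ ^ 2 * ‖Y‖ ^ 2 - ⟪X, Y⟫ ^ 2) ≤ R X Y X Y)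
    (b : OrthonormalBasis ι ℝ E) (v : OrthonormalBasis ι' ℝ E) {φ : E →ₗ[ℝ] E →ₗ[ℝ] ℝ}
    {μ : ι' → ℝ} (hv : ∀ a, b.endOfBilin φ (v a) = μ a • v a) (hμ : ∑ a, μ a = 0) :
    ∑ a, μ a ^ 2 * (Fintype.card ι' * α - ricci b R (v a) (v a)) ≤ secondKindTerm b R φ := by
  have hricci : ∀ a, ricci b R (v a) (v a) = ∑ c, R (v a) (v c) (v a) (v c) := fun a => by
    rw [ricci_eq R b v]
    exact sum_congr rfl fun c _ => by rw [hR1, hR2, neg_neg]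
  have hsec_v : ∀ a c, a ≠ c → α ≤ R (v a) (v c) (v a) (v c) := fun a c hac => by
    simpa [v.norm_eq_one, v.orthonormal.2 hac] using hsec (v a) (v c)
  have hsymm : ∀ a c, R (v a) (v c) (v a) (v c) = R (v c) (v a) (v c) (v a) := fun a c => by
    rw [hR1, hR2, neg_neg]
  simp only [hricci, secondKindTerm_eq_of_endOfBilin_apply R hR2 b v hv]
  exact sum_sq_mul_sub_le_neg_sum_sum hsymm hsec_v hμ

end Curvature

lemma exists_sum_sq_mul_sub_ricci_le_secondKindTerm {E : Type*} [NormedAddCommGroup E]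
    [InnerProductSpace ℝ E] {n : ℕ} (e : OrthonormalBasis (Fin n) ℝ E)
    (R : E →ₗ[ℝ] E →ₗ[ℝ] E →ₗ[ℝ] E →ₗ[ℝ] ℝ) (hR1 : ∀ X Y Z W : E, R X Y Z W = - R Y X Z W)
    (hR2 : ∀ X Y Z W : E, R X Y Z W = - R X Y W Z) {α : ℝ}
    (hsec : ∀ X Y : E, α * (‖X‖ ^ 2 * ‖Y‖ ^ 2 - ⟪X, Y⟫ ^ 2) ≤ R X Y X Y)
    {φ : E →ₗ[ℝ] E →ₗ[ℝ] ℝ} (hφ : ∀ X Y, φ X Y = φ Y X) (htr : ∑ i, φ (e i) (e i) = 0) :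
    ∃ (v : OrthonormalBasis (Fin n) ℝ E) (μ : Fin n → ℝ), (φ ≠ 0 → ∃ a, μ a ≠ 0) ∧
      ∑ a, μ a ^ 2 * (n * α - ricci e R (v a) (v a)) ≤ secondKindTerm e R φ := by
  obtain ⟨v, μ, hv, hμ, hμ0⟩ := e.exists_eigenbasis_endOfBilin hφ htr
  refine ⟨v, μ, hμ0, ?_⟩
  simpa using sum_sq_mul_sub_ricci_le_secondKindTerm R hR1 hR2 hsec e v hv hμ

theorem stmt_4
    {E : Type*} [NormedAddCommGroup E] [InnerProductSpace ℝ E]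
    {n : ℕ} (e : OrthonormalBasis (Fin n) ℝ E)
    (R : E →ₗ[ℝ] E →ₗ[ℝ] E →ₗ[ℝ] E →ₗ[ℝ] ℝ)
    (hR1 : ∀ X Y Z W : E, R X Y Z W = - R Y X Z W)
    (hR2 : ∀ X Y Z W : E, R X Y Z W = - R X Y W Z)
    (α : ℝ)
    (hsec : ∀ X Y : E, α * (‖X‖ ^ 2 * ‖Y‖ ^ 2 - ⟪X, Y⟫ ^ 2) ≤ R X Y X Y) :
    ((∀ X : E, X ≠ 0 → (∑ m, R (e m) X (e m) X) < (n : ℝ) * α * ‖X‖ ^ 2) →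
      ∀ φ : E →ₗ[ℝ] E →ₗ[ℝ] ℝ, (∀ X Y : E, φ X Y = φ Y X) →
        (∑ i, φ (e i) (e i)) = 0 → φ ≠ 0 →
        0 < ∑ i, ∑ j, ∑ k, ∑ l, R (e i) (e k) (e l) (e j) * φ (e k) (e l) * φ (e i) (e j)) ∧
    ((∀ X : E, (∑ m, R (e m) X (e m) X) ≤ (n : ℝ) * α * ‖X‖ ^ 2) →
      ∀ φ : E →ₗ[ℝ] E →ₗ[ℝ] ℝ, (∀ X Y : E, φ X Y = φ Y X) →
        (∑ i, φ (e i) (e i)) = 0 →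
        0 ≤ ∑ i, ∑ j, ∑ k, ∑ l, R (e i) (e k) (e l) (e j) * φ (e k) (e l) * φ (e i) (e j)) := by
  constructor
  · intro hRic φ hφ htr hφ0
    obtain ⟨v, μ, hμ0, hbound⟩ :=
      exists_sum_sq_mul_sub_ricci_le_secondKindTerm e R hR1 hR2 hsec hφ htr
    obtain ⟨a, ha⟩ := hμ0 hφ0
    have hRic_v : ∀ c, ricci e R (v c) (v c) < n * α := fun c => by
      simpa [ricci, v.norm_eq_one] using hRic (v c) (v.orthonormal.ne_zero c)
    refine (sum_pos' (fun c _ => ?_) ⟨a, mem_univ a, ?_⟩).trans_le hbound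
    · exact mul_nonneg (sq_nonneg _) (sub_nonneg.2 (hRic_v c).le)
    · exact mul_pos (sq_pos_of_ne_zero ha) (sub_pos.2 (hRic_v a))
  · intro hRic φ hφ htr
    obtain ⟨v, μ, -, hbound⟩ :=
      exists_sum_sq_mul_sub_ricci_le_secondKindTerm e R hR1 hR2 hsec hφ htr
    have hRic_v : ∀ c, ricci e R (v c) (v c) ≤ n * α := fun c => by
      simpa [ricci, v.norm_eq_one] using hRic (v c)
    exact (sum_nonneg fun c _ => mul_nonneg (sq_nonneg _) (sub_nonneg.2 (hRic_v c))).trans hbound
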